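/- Let X be a real Banach space such that the set of extreme points of the closed unit ball of X* is weak*-closed. Let Y ⊆ X be a closed subspace and let y* be a norm-one functional in the weak*-closure of the set of extreme points of the unit ball of Y*. If y* has a unique norm-preserving extension x* ∈ X* with ‖x*‖ = 1, then y* is an extreme point of the closed unit ball of Y*. -/

import Mathlib

/-!
Every extreme point of `B_{Y*}` extends to an extreme point of `B_{X*}`: its norm-one extensions
form a weak*-compact face of `B_{X*}`, which has an extreme point by Krein–Milman. By
Banach–Alaoglu, restriction to `Y` maps the weak*-closure of `ext B_{X*}` onto a weak*-closed set
containing `ext B_{Y*}`, hence containing `y*`. So `y*` is the restriction of some `x ∈ ext B_{X*}`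
(the extreme points being weak*-closed), and `x` is the unique norm-one extension of `y*`.
If `y* = s a + t b` with `a, b ∈ B_{Y*}`, Hahn–Banach extensions `a', b'` of `a, b` make
`s a' + t b'` a norm-one extension of `y*`, i.e. `x`; extremality of `x` gives `a' = x`, so `a = y*`.
-/

open Metric Set

section Restriction

variable {X : Type*} [NormedAddCommGroup X] [NormedSpace ℝ X] {Y : Submodule ℝ X}

instance WeakDual.locallyConvexSpace : LocallyConvexSpace ℝ (WeakDual ℝ X) :=
  WeakBilin.locallyConvexSpace

theorem norm_le_norm_of_restrict_eq {f : StrongDual ℝ X} {g : StrongDual ℝ Y}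
    (h : ∀ y : Y, f y = g y) : ‖g‖ ≤ ‖f‖ :=
  g.opNorm_le_bound (norm_nonneg f) fun y => by
    rw [← h]
    exact f.le_opNorm y

theorem mem_closedBall_of_restrict_eq {f : StrongDual ℝ X} {g : StrongDual ℝ Y}
    (h : ∀ y : Y, f y = g y) {r : ℝ} (hf : f ∈ closedBall (0 : StrongDual ℝ X) r) :
    g ∈ closedBall (0 : StrongDual ℝ Y) r :=
  (mem_closedBall_zero_iff (E := StrongDual ℝ Y)).2 <|
    (norm_le_norm_of_restrict_eq h).trans ((mem_closedBall_zero_iff (E := StrongDual ℝ X)).1 hf)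

theorem isExtreme_closedBall_setOf_restrict_eq {e : StrongDual ℝ Y}
    (he : e ∈ extremePoints ℝ (closedBall (0 : StrongDual ℝ Y) 1)) :
    IsExtreme ℝ (closedBall (0 : StrongDual ℝ X) 1)
      {f | f ∈ closedBall 0 1 ∧ ∀ y : Y, f y = e y} := by
  refine ⟨fun f hf => hf.1, fun f₁ hf₁ f₂ hf₂ f ⟨_, hfe⟩ ⟨a, b, ha, hb, hab, hf⟩ => ⟨hf₁, ?_⟩⟩
  let r₁ : StrongDual ℝ Y := f₁.comp Y.subtypeL
  let r₂ : StrongDual ℝ Y := f₂.comp Y.subtypeL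
  have hseg : e ∈ openSegment ℝ r₁ r₂ := by
    refine ⟨a, b, ha, hb, hab, ContinuousLinearMap.ext fun y => ?_⟩
    simp [r₁, r₂, ← hfe y, ← hf]
  intro y
  rw [← he.2 (mem_closedBall_of_restrict_eq (fun _ => rfl) hf₁)
    (mem_closedBall_of_restrict_eq (fun _ => rfl) hf₂) hseg]
  rfl

theorem exists_extremePoint_restrict_eq {e : StrongDual ℝ Y}
    (he : e ∈ extremePoints ℝ (closedBall (0 : StrongDual ℝ Y) 1)) :
    ∃ f ∈ extremePoints ℝ (closedBall (0 : StrongDual ℝ X) 1), ∀ y : Y, f y = e y := by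
  set F : Set (StrongDual ℝ X) := {f | f ∈ closedBall 0 1 ∧ ∀ y : Y, f y = e y}
  have hF_compact : IsCompact (StrongDual.toWeakDual '' F) := by
    rw [StrongDual.toWeakDual.image_eq_preimage_symm]
    have hclosed : IsClosed {f : WeakDual ℝ X | ∀ y : Y, f y = e y} := by
      simp only [ofPred_forall]
      exact isClosed_iInter fun y => isClosed_eq (WeakDual.eval_continuous _) continuous_const
    exact (WeakDual.isCompact_closedBall 0 1).inter_right hclosed
  obtain ⟨g, hg, hge⟩ := exists_extension_norm_eq Y e
  have hF_nonempty : (StrongDual.toWeakDual '' F).Nonempty :=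
    ⟨_, mem_image_of_mem _ ⟨(mem_closedBall_zero_iff (E := StrongDual ℝ X)).2
      (hge.trans_le ((mem_closedBall_zero_iff (E := StrongDual ℝ Y)).1 he.1)), hg⟩⟩
  obtain ⟨_, ⟨f, hf, rfl⟩⟩ := (image_extremePoints StrongDual.toWeakDual F ▸
    hF_compact.extremePoints_nonempty hF_nonempty)
  exact ⟨f, (isExtreme_closedBall_setOf_restrict_eq he).extremePoints_subset_extremePoints hf,
    hf.1.2⟩

noncomputable def WeakDual.restrict (Y : Submodule ℝ X) (f : WeakDual ℝ X) : WeakDual ℝ Y :=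
  StrongDual.toWeakDual ((WeakDual.toStrongDual f).comp Y.subtypeL)

theorem WeakDual.continuous_restrict : Continuous (WeakDual.restrict Y) :=
  WeakDual.continuous_of_continuous_eval fun y => WeakDual.eval_continuous (y : X)

theorem closure_extremePoints_subset_image_restrict :
    closure (StrongDual.toWeakDual '' extremePoints ℝ (closedBall (0 : StrongDual ℝ Y) 1)) ⊆
      WeakDual.restrict Y ''
        closure (StrongDual.toWeakDual '' extremePoints ℝ (closedBall (0 : StrongDual ℝ X) 1)) := by
  have hcompact : IsCompact
      (closure (StrongDual.toWeakDual '' extremePoints ℝ (closedBall (0 : StrongDual ℝ X) 1))) := by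
    refine (WeakDual.isCompact_closedBall 0 1).of_isClosed_subset isClosed_closure
      (closure_minimal ?_ (WeakDual.isClosed_closedBall 0 1))
    rintro _ ⟨f, hf, rfl⟩
    exact hf.1
  refine (hcompact.image WeakDual.continuous_restrict).isClosed.closure_subset_iff.2 ?_
  rintro _ ⟨e, he, rfl⟩
  obtain ⟨f, hf, hfe⟩ := exists_extremePoint_restrict_eq he
  exact ⟨StrongDual.toWeakDual f, subset_closure (mem_image_of_mem _ hf),
    ContinuousLinearMap.ext hfe⟩

theorem mem_extremePoints_of_existsUnique_extension {y' : StrongDual ℝ Y} (hy : ‖y'‖ = 1)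
    (huniq : ∃! x' : StrongDual ℝ X, (∀ y : Y, x' y = y' y) ∧ ‖x'‖ = 1) {x : StrongDual ℝ X}
    (hx : x ∈ extremePoints ℝ (closedBall (0 : StrongDual ℝ X) 1)) (hxy : ∀ y : Y, x y = y' y) :
    y' ∈ extremePoints ℝ (closedBall (0 : StrongDual ℝ Y) 1) := by
  have norm_eq_one {f : StrongDual ℝ X} (hf : f ∈ closedBall 0 1) (hfy : ∀ y : Y, f y = y' y) :
      ‖f‖ = 1 :=
    le_antisymm ((mem_closedBall_zero_iff (E := StrongDual ℝ X)).1 hf)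
      (hy ▸ norm_le_norm_of_restrict_eq hfy)
  refine ⟨(mem_closedBall_zero_iff (E := StrongDual ℝ Y)).2 hy.le, fun a ha b hb hab => ?_⟩
  obtain ⟨s, t, hs, ht, hst, rfl⟩ := hab
  obtain ⟨a', ha'a, ha'⟩ := exists_extension_norm_eq Y a
  obtain ⟨b', hb'b, hb'⟩ := exists_extension_norm_eq Y b
  have ha'_mem : a' ∈ closedBall (0 : StrongDual ℝ X) 1 :=
    (mem_closedBall_zero_iff (E := StrongDual ℝ X)).2
      (ha' ▸ (mem_closedBall_zero_iff (E := StrongDual ℝ Y)).1 ha)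
  have hb'_mem : b' ∈ closedBall (0 : StrongDual ℝ X) 1 :=
    (mem_closedBall_zero_iff (E := StrongDual ℝ X)).2
      (hb' ▸ (mem_closedBall_zero_iff (E := StrongDual ℝ Y)).1 hb)
  have hc_mem := convex_closedBall (0 : StrongDual ℝ X) 1 ha'_mem hb'_mem hs.le ht.le hst
  have hcy : ∀ y : Y, (s • a' + t • b') y = (s • a + t • b) y := by simp [ha'a, hb'b]
  have hc : s • a' + t • b' = x :=
    huniq.unique ⟨hcy, norm_eq_one hc_mem hcy⟩ ⟨hxy, norm_eq_one hx.1 hxy⟩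
  ext y
  rw [← ha'a, hx.2 ha'_mem hb'_mem ⟨s, t, hs, ht, hst, hc⟩, hxy]

end Restriction

theorem stmt_3 (X : Type*) [NormedAddCommGroup X] [NormedSpace ℝ X]
    (hXext : IsClosed
      (StrongDual.toWeakDual '' Set.extremePoints ℝ (Metric.closedBall (0 : StrongDual ℝ X) 1) :
        Set (WeakDual ℝ X)))
    (Y : Submodule ℝ X)
    (y' : StrongDual ℝ Y) (hy : ‖y'‖ = 1)
    (hycl : StrongDual.toWeakDual y' ∈
      closure (StrongDual.toWeakDual '' Set.extremePoints ℝ (Metric.closedBall (0 : StrongDual ℝ Y) 1) :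
        Set (WeakDual ℝ Y)))
    (huniq : ∃! x' : StrongDual ℝ X, (∀ y : Y, x' (y : X) = y' y) ∧ ‖x'‖ = 1) :
    y' ∈ Set.extremePoints ℝ (Metric.closedBall (0 : StrongDual ℝ Y) 1) := by
  obtain ⟨_, ⟨x, hx, rfl⟩, hxy⟩ :=
    hXext.closure_eq ▸ closure_extremePoints_subset_image_restrict hycl
  exact mem_extremePoints_of_existsUnique_extension hy huniq hx (DFunLike.congr_fun hxy)
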